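/- Let p = [b_1^{a_1} ⋯ b_r^{a_r}] (b_1 ≥ ⋯ ≥ b_r) be an orthogonal partition of 2n+1 in which every b_i is odd. Then Σ_i a_i is odd, 2n* = (Σ_i a_i) − 1, and with P := [p_1 p_1 (2n*)] one has the exact identity P^t = p^-; in particular (P^t)_{Sp_{2n}} = (p^-)_{Sp_{2n}}. -/

import Mathlib

namespace JiangWF

/-- `sCount p i` : the number of parts of `p` that are `≥ i`. -/
def sCount (p : Multiset ℕ) (i : ℕ) : ℕ := (p.filter (fun a => i ≤ a)).card

/-- `rCount p i` : the number of parts of `p` equal to `i`. -/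
def rCount (p : Multiset ℕ) (i : ℕ) : ℕ := p.count i

/-- The largest part of `p` (`0` for the empty partition). -/
def maxPart (p : Multiset ℕ) : ℕ := p.sup

/-- The smallest part of `p` (`0` for the empty partition). -/
noncomputable def minPart (p : Multiset ℕ) : ℕ := sInf {a : ℕ | a ∈ p}

/-- The transpose partition: its `i`-th part is `sCount p i`, for `1 ≤ i ≤ maxPart p`. -/
def transpose (p : Multiset ℕ) : Multiset ℕ :=
  (Multiset.range (maxPart p)).map fun i => sCount p (i + 1)

/-- The sum of the `m` largest parts of `p`. -/
def topSum (p : Multiset ℕ) (m : ℕ) : ℕ :=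
  ∑ i ∈ Finset.Icc 1 p.sum, min m (sCount p i)

/-- Dominance order: `domLE p q` means `p ≤ q`. -/
def domLE (p q : Multiset ℕ) : Prop := ∀ m, topSum p m ≤ topSum q m

/-- `p` is a partition of `N`: all parts positive, summing to `N`. -/
def IsPartitionOf (p : Multiset ℕ) (N : ℕ) : Prop := (∀ a ∈ p, 0 < a) ∧ p.sum = N

/-- Symplectic partition: every odd part occurs with even multiplicity. -/
def IsSymplectic (p : Multiset ℕ) : Prop := ∀ a, a % 2 = 1 → Even (p.count a)

/-- Orthogonal partition: every even part occurs with even multiplicity. -/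
def IsOrthogonal (p : Multiset ℕ) : Prop := ∀ a, a % 2 = 0 → Even (p.count a)

/-- `p^-`: decrease the smallest part by one (deleting it if it becomes `0`). -/
noncomputable def pMinus (p : Multiset ℕ) : Multiset ℕ :=
  if minPart p ≤ 1 then p.erase (minPart p)
  else (minPart p - 1) ::ₘ p.erase (minPart p)

/-- `p^+`: increase the largest part by one. -/
def pPlus (p : Multiset ℕ) : Multiset ℕ := (maxPart p + 1) ::ₘ p.erase (maxPart p)

/-- `p^{+-}`: increase the largest part by one and decrease the smallest by one. -/
noncomputable def pPM (p : Multiset ℕ) : Multiset ℕ := pMinus (pPlus p)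

/-- `p₁ = [⌊b_1/2⌋^{a_1} ⋯ ⌊b_r/2⌋^{a_r}]^t` (discarding zero entries before transposing). -/
def pOne (p : Multiset ℕ) : Multiset ℕ :=
  transpose ((p.map fun b => b / 2).filter fun x => 0 < x)

/-- `Σ_{i : b_i odd} a_i`: the number of odd parts of `p`. -/
def oddMult (p : Multiset ℕ) : ℕ := (p.filter fun a => a % 2 = 1).card

/-- `n* = ⌊(Σ_{i : b_i odd} a_i)/2⌋`. -/
def nStar (p : Multiset ℕ) : ℕ := oddMult p / 2

/-- Append an extra part `m` to `q`, omitted if `m = 0`. -/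
def addPart (m : ℕ) (q : Multiset ℕ) : Multiset ℕ := if m = 0 then q else m ::ₘ q

/-- `c` is the `Sp`-collapse of `p`: the maximal symplectic partition `≤ p` in dominance. -/
def IsSpCollapse (p c : Multiset ℕ) : Prop :=
  IsPartitionOf c p.sum ∧ IsSymplectic c ∧ domLE c p ∧
    ∀ c', IsPartitionOf c' p.sum → IsSymplectic c' → domLE c' p → domLE c' c

/-- `c` is the `SO`-collapse of `p`: the maximal orthogonal partition `≤ p` in dominance. -/
def IsSOCollapse (p c : Multiset ℕ) : Prop :=
  IsPartitionOf c p.sum ∧ IsOrthogonal c ∧ domLE c p ∧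
    ∀ c', IsPartitionOf c' p.sum → IsOrthogonal c' → domLE c' p → domLE c' c

/-- `e` is the `Sp`-expansion of `p`: the minimal special symplectic partition `≥ p`. -/
def IsSpExpansion (p e : Multiset ℕ) : Prop :=
  IsPartitionOf e p.sum ∧ IsSymplectic e ∧ IsSymplectic (transpose e) ∧ domLE p e ∧
    ∀ e', IsPartitionOf e' p.sum → IsSymplectic e' → IsSymplectic (transpose e') →
      domLE p e' → domLE e e'

/-- `e` is the `SO_{2n+1}`-expansion of `p`: the minimal special orthogonal partition `≥ p`
(odd case: special means the transpose is orthogonal). -/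
def IsSOOddExpansion (p e : Multiset ℕ) : Prop :=
  IsPartitionOf e p.sum ∧ IsOrthogonal e ∧ IsOrthogonal (transpose e) ∧ domLE p e ∧
    ∀ e', IsPartitionOf e' p.sum → IsOrthogonal e' → IsOrthogonal (transpose e') →
      domLE p e' → domLE e e'

/-- `e` is the `SO_{2n}`-expansion of `p`: the minimal special orthogonal partition `≥ p`
(even case: special means the transpose is symplectic). -/
def IsSOEvenExpansion (p e : Multiset ℕ) : Prop :=
  IsPartitionOf e p.sum ∧ IsOrthogonal e ∧ IsSymplectic (transpose e) ∧ domLE p e ∧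
    ∀ e', IsPartitionOf e' p.sum → IsOrthogonal e' → IsSymplectic (transpose e') →
      domLE p e' → domLE e e'

/-- `dim_C(q)` for a symplectic partition `q` of `2k`:
`2k² + k − (1/2)Σ s_i(q)² − (1/2)Σ_{i odd} r_i(q)` (note `2k² + k = (|q|² + |q|)/2`). -/
def dimC (p : Multiset ℕ) : ℚ :=
  ((p.sum : ℚ) ^ 2 + (p.sum : ℚ)) / 2
    - (∑ i ∈ Finset.Icc 1 p.sum, (sCount p i : ℚ) ^ 2) / 2
    - (∑ i ∈ Finset.Icc 1 p.sum, if i % 2 = 1 then (rCount p i : ℚ) else 0) / 2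

/-- `dim_B(q)` for an orthogonal partition `q` of `2k+1`:
`2k² + k − (1/2)Σ s_i(q)² + (1/2)Σ_{i odd} r_i(q)` (note `2k² + k = (|q|² − |q|)/2`). -/
def dimB (p : Multiset ℕ) : ℚ :=
  ((p.sum : ℚ) ^ 2 - (p.sum : ℚ)) / 2
    - (∑ i ∈ Finset.Icc 1 p.sum, (sCount p i : ℚ) ^ 2) / 2
    + (∑ i ∈ Finset.Icc 1 p.sum, if i % 2 = 1 then (rCount p i : ℚ) else 0) / 2

/-- `dim_D(q)` for an orthogonal partition `q` of `2k`:
`2k² − k − (1/2)Σ s_i(q)² + (1/2)Σ_{i odd} r_i(q)` (note `2k² − k = (|q|² − |q|)/2`). -/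
def dimD (p : Multiset ℕ) : ℚ :=
  ((p.sum : ℚ) ^ 2 - (p.sum : ℚ)) / 2
    - (∑ i ∈ Finset.Icc 1 p.sum, (sCount p i : ℚ) ^ 2) / 2
    + (∑ i ∈ Finset.Icc 1 p.sum, if i % 2 = 1 then (rCount p i : ℚ) else 0) / 2

/-!
Count columns. Halving the parts of `p` turns `s_{2x}(p)` into `s_x` of the halves, and as all
parts of `p` are odd, `s_{2x}(p) = s_{2x+1}(p)`; hence `s_j(p^t) = [j ≤ |p|] + 2 s_j(p₁)`, that is
`p^t = [p₁ p₁ |p|]`. Lowering the smallest part `μ` of `p` by one shortens exactly the column `μ`,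
which has length `|p|`, so `(p^-)^t = [p₁ p₁ (|p| - 1)] = P`, and `P^t = p^-` as transposition is
an involution. The two `Sp`-collapses agree because dominance is antisymmetric: the increments of
`m ↦ topSum q m` are the parts of `q^t`.
-/

open Finset

lemma sCount_cons (a : ℕ) (s : Multiset ℕ) (k : ℕ) :
    sCount (a ::ₘ s) k = (if k ≤ a then 1 else 0) + sCount s k := by
  rw [sCount, Multiset.filter_cons]
  split_ifs <;> simp [sCount, add_comm]

lemma sCount_add (s t : Multiset ℕ) (k : ℕ) : sCount (s + t) k = sCount s k + sCount t k := by
  simp only [sCount, Multiset.filter_add, Multiset.card_add]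

lemma sCount_le_card (p : Multiset ℕ) (k : ℕ) : sCount p k ≤ Multiset.card p :=
  Multiset.card_le_card (Multiset.filter_le _ p)

lemma sCount_antitone (p : Multiset ℕ) : Antitone (sCount p) := fun _ _ h =>
  Multiset.card_le_card (Multiset.monotone_filter_right p fun _ ha => h.trans ha)

lemma le_maxPart_of_le_sCount {r : Multiset ℕ} {j k : ℕ} (hj : 0 < j) (h : j ≤ sCount r k) :
    k ≤ maxPart r := by
  obtain ⟨a, ha⟩ := Multiset.card_pos_iff_exists_mem.1 (hj.trans_le h)
  obtain ⟨hmem, hka⟩ := Multiset.mem_filter.1 ha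
  exact hka.trans (Multiset.le_sup hmem)

lemma sCount_eq_card_of_le_minPart (p : Multiset ℕ) {k : ℕ} (hk : k ≤ minPart p) :
    sCount p k = Multiset.card p := by
  rw [sCount, Multiset.filter_eq_self.2 fun a ha => hk.trans (Nat.sInf_le ha)]

lemma sCount_eq_count_add_sCount_succ (p : Multiset ℕ) (k : ℕ) :
    sCount p k = p.count k + sCount p (k + 1) := by
  induction p using Multiset.induction with
  | empty => simp [sCount]
  | cons a s ih =>
    rw [sCount_cons, sCount_cons, Multiset.count_cons, ih]
    split_ifs <;> omega

lemma eq_of_sCount_eq {p q : Multiset ℕ} (hp : ∀ a ∈ p, 0 < a) (hq : ∀ a ∈ q, 0 < a)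
    (h : ∀ k, 0 < k → sCount p k = sCount q k) : p = q := by
  ext a
  rcases Nat.eq_zero_or_pos a with rfl | ha
  · rw [Multiset.count_eq_zero.2 fun h0 => (hp 0 h0).false,
      Multiset.count_eq_zero.2 fun h0 => (hq 0 h0).false]
  · have hp' := sCount_eq_count_add_sCount_succ p a
    have hq' := sCount_eq_count_add_sCount_succ q a
    have := h a ha
    have := h (a + 1) (by omega)
    omega

lemma le_card_filter_Icc_iff {P : ℕ → Prop} [DecidablePred P]
    (hP : ∀ a b, a ≤ b → P b → P a) {x N : ℕ} (hx : 0 < x) (hxN : x ≤ N) :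
    x ≤ #{y ∈ Icc 1 N | P y} ↔ P x := by
  constructor
  · intro h
    by_contra hPx
    have hsub : {y ∈ Icc 1 N | P y} ⊆ Icc 1 (x - 1) := by
      intro y hy
      simp only [mem_filter, mem_Icc] at hy ⊢
      exact ⟨hy.1.1, by_contra fun hyx => hPx (hP x y (by omega) hy.2)⟩
    have := card_le_card hsub
    simp only [Nat.card_Icc] at this
    omega
  · intro hPx
    have hsub : Icc 1 x ⊆ {y ∈ Icc 1 N | P y} := by
      intro y hy
      simp only [mem_filter, mem_Icc] at hy ⊢
      exact ⟨⟨hy.1, hy.2.trans hxN⟩, hP y x hy.2 hPx⟩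
    simpa using card_le_card hsub

lemma sCount_pos_of_le_maxPart {r : Multiset ℕ} {k : ℕ} (hk : 0 < k) (h : k ≤ maxPart r) :
    0 < sCount r k := by
  by_contra h0
  have hlt : ∀ a ∈ r, a ≤ k - 1 := fun a ha => by
    by_contra hak
    exact h0 (Multiset.card_pos_iff_exists_mem.2 ⟨a, Multiset.mem_filter.2 ⟨ha, by omega⟩⟩)
  have := Multiset.sup_le.2 hlt
  rw [maxPart] at h
  omega

lemma sCount_transpose (r : Multiset ℕ) {j N : ℕ} (hj : 0 < j) (hN : maxPart r ≤ N) :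
    sCount (transpose r) j = #{x ∈ Icc 1 N | j ≤ sCount r x} := by
  have hM : sCount (transpose r) j = #{i ∈ range (maxPart r) | j ≤ sCount r (i + 1)} := by
    rw [sCount, transpose, Multiset.filter_map, Multiset.card_map]; rfl
  have hshift : #{i ∈ range (maxPart r) | j ≤ sCount r (i + 1)} =
      #{x ∈ Icc 1 (maxPart r) | j ≤ sCount r x} := by
    apply card_nbij' (· + 1) (· - 1) <;> intro a ha <;> simp_all; omega
  have hext : {x ∈ Icc 1 N | j ≤ sCount r x} = {x ∈ Icc 1 (maxPart r) | j ≤ sCount r x} := by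
    ext x
    simp only [mem_filter, mem_Icc]
    constructor
    · rintro ⟨⟨h1, -⟩, hx⟩
      exact ⟨⟨h1, le_maxPart_of_le_sCount hj hx⟩, hx⟩
    · rintro ⟨⟨h1, h2⟩, hx⟩
      exact ⟨⟨h1, h2.trans hN⟩, hx⟩
  rw [hM, hshift, hext]

lemma le_sCount_transpose_iff (r : Multiset ℕ) {j x : ℕ} (hj : 0 < j) (hx : 0 < x) :
    x ≤ sCount (transpose r) j ↔ j ≤ sCount r x := by
  rw [sCount_transpose r hj (Nat.le_add_right (maxPart r) x)]
  exact le_card_filter_Icc_iff (fun a b hab h => h.trans (sCount_antitone r hab)) hx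
    (Nat.le_add_left x _)

lemma pos_of_mem_transpose {r : Multiset ℕ} {a : ℕ} (ha : a ∈ transpose r) : 0 < a := by
  obtain ⟨i, hi, rfl⟩ := Multiset.mem_map.1 ha
  exact sCount_pos_of_le_maxPart i.succ_pos (Multiset.mem_range.1 hi)

lemma transpose_transpose {r : Multiset ℕ} (hr : ∀ a ∈ r, 0 < a) :
    transpose (transpose r) = r := by
  refine eq_of_sCount_eq (fun _ => pos_of_mem_transpose) hr fun k hk => ?_
  have hfilter : {j ∈ Icc 1 (maxPart (transpose r) + Multiset.card r) |
      k ≤ sCount (transpose r) j} = Icc 1 (sCount r k) := by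
    ext j
    simp only [mem_filter, mem_Icc]
    constructor
    · rintro ⟨⟨hj, -⟩, hk'⟩
      exact ⟨hj, (le_sCount_transpose_iff r hj hk).1 hk'⟩
    · rintro ⟨hj, hjk⟩
      exact ⟨⟨hj, hjk.trans ((sCount_le_card r k).trans (Nat.le_add_left _ _))⟩,
        (le_sCount_transpose_iff r hj hk).2 hjk⟩
  rw [sCount_transpose _ hk (Nat.le_add_right _ _), hfilter, Nat.card_Icc, Nat.add_sub_cancel]

lemma topSum_succ (c : Multiset ℕ) (m : ℕ) :
    topSum c (m + 1) = topSum c m + sCount (transpose c) (m + 1) := by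
  have hmax : maxPart c ≤ c.sum := Multiset.sup_le.2 fun _ h => Multiset.le_sum_of_mem h
  rw [sCount_transpose c m.succ_pos hmax, card_filter, topSum, topSum, ← sum_add_distrib]
  refine sum_congr rfl fun i _ => ?_
  split_ifs <;> omega

lemma eq_of_domLE_of_domLE {c₁ c₂ : Multiset ℕ} (h₁ : ∀ a ∈ c₁, 0 < a) (h₂ : ∀ a ∈ c₂, 0 < a)
    (h₁₂ : domLE c₁ c₂) (h₂₁ : domLE c₂ c₁) : c₁ = c₂ := by
  have htop : ∀ m, topSum c₁ m = topSum c₂ m := fun m => (h₁₂ m).antisymm (h₂₁ m)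
  rw [← transpose_transpose h₁, ← transpose_transpose h₂]
  refine congrArg transpose <| eq_of_sCount_eq (fun _ => pos_of_mem_transpose)
    (fun _ => pos_of_mem_transpose) fun k hk => ?_
  obtain ⟨m, rfl⟩ : ∃ m, k = m + 1 := ⟨k - 1, by omega⟩
  have := topSum_succ c₁ m
  have := topSum_succ c₂ m
  have := htop m
  have := htop (m + 1)
  omega

lemma IsSpCollapse.unique {r c₁ c₂ : Multiset ℕ} (h₁ : IsSpCollapse r c₁)
    (h₂ : IsSpCollapse r c₂) : c₁ = c₂ :=
  eq_of_domLE_of_domLE h₁.1.1 h₂.1.1 (h₂.2.2.2 c₁ h₁.1 h₁.2.1 h₁.2.2.1)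
    (h₁.2.2.2 c₂ h₂.1 h₂.2.1 h₂.2.2.1)

lemma card_filter_Icc_two_mul_add_one {P : ℕ → Prop} [DecidablePred P]
    (hP : ∀ x, 0 < x → (P (2 * x) ↔ P (2 * x + 1))) (N : ℕ) :
    #{y ∈ Icc 1 (2 * N + 1) | P y} = (if P 1 then 1 else 0) + 2 * #{x ∈ Icc 1 N | P (2 * x)} := by
  rw [card_filter, card_filter]
  induction N with
  | zero =>
    simp only [Nat.mul_zero, zero_add, Icc_self, sum_singleton, Icc_eq_empty_of_lt one_pos,
      sum_empty, add_zero]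
  | succ N ih =>
    have h := hP (N + 1) N.succ_pos
    rw [show 2 * (N + 1) = 2 * N + 1 + 1 by ring] at h ⊢
    rw [sum_Icc_succ_top (b := 2 * N + 1 + 1) (by omega),
      sum_Icc_succ_top (b := 2 * N + 1) (by omega), ih, sum_Icc_succ_top (b := N) (by omega),
      show 2 * (N + 1) = 2 * N + 1 + 1 by ring]
    split_ifs <;> simp_all <;> omega

lemma sCount_halves (p : Multiset ℕ) {x : ℕ} (hx : 0 < x) :
    sCount ((p.map fun b => b / 2).filter fun y => 0 < y) x = sCount p (2 * x) := by
  rw [sCount, sCount, Multiset.filter_filter, Multiset.filter_map, Multiset.card_map]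
  congr 1
  exact Multiset.filter_congr fun b _ => by simp only [Function.comp_apply]; omega

lemma maxPart_halves_le (p : Multiset ℕ) :
    maxPart ((p.map fun b => b / 2).filter fun y => 0 < y) ≤ maxPart p := by
  refine Multiset.sup_le.2 fun a ha => ?_
  obtain ⟨b, hb, rfl⟩ := Multiset.mem_map.1 (Multiset.mem_of_mem_filter ha)
  exact (Nat.div_le_self b 2).trans (Multiset.le_sup hb)

lemma sCount_two_mul_eq_of_odd {p : Multiset ℕ} (hodd : ∀ a ∈ p, a % 2 = 1) (x : ℕ) :
    sCount p (2 * x) = sCount p (2 * x + 1) := by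
  simp only [sCount]
  congr 1
  exact Multiset.filter_congr fun b hb => by have := hodd b hb; omega

lemma sCount_transpose_of_odd {p : Multiset ℕ} (hodd : ∀ a ∈ p, a % 2 = 1) {j : ℕ}
    (hj : 0 < j) :
    sCount (transpose p) j = (if j ≤ Multiset.card p then 1 else 0) + 2 * sCount (pOne p) j := by
  have hone : sCount p 1 = Multiset.card p := by
    rw [sCount, Multiset.filter_eq_self.2 fun a ha => by have := hodd a ha; omega]
  have hhalves : ∀ x ∈ Icc 1 (maxPart p),
      (j ≤ sCount p (2 * x) ↔ j ≤ sCount ((p.map fun b => b / 2).filter fun y => 0 < y) x) :=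
    fun x hx => by rw [sCount_halves p (mem_Icc.1 hx).1]
  rw [sCount_transpose p hj (by omega : maxPart p ≤ 2 * maxPart p + 1),
    card_filter_Icc_two_mul_add_one (fun x _ => by rw [sCount_two_mul_eq_of_odd hodd x]),
    hone, pOne, sCount_transpose _ hj (maxPart_halves_le p), filter_congr hhalves]

lemma minPart_mem {p : Multiset ℕ} (hp : p ≠ 0) : minPart p ∈ p :=
  Nat.sInf_mem (Multiset.exists_mem_of_ne_zero hp)

lemma pos_of_mem_pMinus {p : Multiset ℕ} (hpos : ∀ a ∈ p, 0 < a) {a : ℕ} (ha : a ∈ pMinus p) :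
    0 < a := by
  unfold pMinus at ha
  split_ifs at ha with h
  · exact hpos a (Multiset.mem_of_mem_erase ha)
  · rcases Multiset.mem_cons.1 ha with rfl | ha
    · omega
    · exact hpos a (Multiset.mem_of_mem_erase ha)

lemma sCount_pMinus_add {p : Multiset ℕ} (hp : p ≠ 0) {k : ℕ} (hk : 0 < k) :
    sCount (pMinus p) k + (if k = minPart p then 1 else 0) = sCount p k := by
  have hsplit :
      sCount p k = (if k ≤ minPart p then 1 else 0) + sCount (p.erase (minPart p)) k := by
    conv_lhs => rw [← Multiset.cons_erase (minPart_mem hp)]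
    exact sCount_cons _ _ k
  by_cases h : minPart p ≤ 1
  · rw [pMinus, if_pos h, hsplit]; split_ifs <;> omega
  · rw [pMinus, if_neg h, sCount_cons, hsplit]; split_ifs <;> omega

lemma maxPart_pMinus_le {p : Multiset ℕ} (hp : p ≠ 0) : maxPart (pMinus p) ≤ maxPart p := by
  have hsub : ∀ a ∈ pMinus p, ∃ b ∈ p, a ≤ b := fun a ha => by
    unfold pMinus at ha
    split_ifs at ha
    · exact ⟨a, Multiset.mem_of_mem_erase ha, le_rfl⟩
    · rcases Multiset.mem_cons.1 ha with rfl | ha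
      · exact ⟨minPart p, minPart_mem hp, Nat.sub_le _ _⟩
      · exact ⟨a, Multiset.mem_of_mem_erase ha, le_rfl⟩
  refine Multiset.sup_le.2 fun a ha => ?_
  obtain ⟨b, hb, hab⟩ := hsub a ha
  exact hab.trans (Multiset.le_sup hb)

lemma sCount_transpose_pMinus_add {p : Multiset ℕ} (hpos : ∀ a ∈ p, 0 < a) {j : ℕ}
    (hj : 0 < j) :
    sCount (transpose (pMinus p)) j + (if j = Multiset.card p then 1 else 0) =
      sCount (transpose p) j := by
  rcases eq_or_ne p 0 with rfl | hp
  · simp [pMinus, minPart, transpose, maxPart, hj.ne']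
  set μ := minPart p
  have hμ : μ ∈ Icc 1 (maxPart p) :=
    mem_Icc.2 ⟨hpos μ (minPart_mem hp), Multiset.le_sup (minPart_mem hp)⟩
  have hterm : ∀ x ∈ Icc 1 (maxPart p), (if j ≤ sCount p x then 1 else 0) =
      (if j ≤ sCount (pMinus p) x then 1 else 0) +
        if μ = x then (if j = Multiset.card p then 1 else 0) else 0 := fun x hx => by
    have h := sCount_pMinus_add hp (mem_Icc.1 hx).1
    have hμc := sCount_eq_card_of_le_minPart p (le_refl μ)
    split_ifs at * <;> subst_vars <;> omega
  rw [sCount_transpose _ hj (maxPart_pMinus_le hp), sCount_transpose p hj le_rfl, card_filter,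
    card_filter, sum_congr rfl hterm, sum_add_distrib, sum_ite_eq, if_pos hμ]

lemma sCount_addPart (m : ℕ) (q : Multiset ℕ) {j : ℕ} (hj : 0 < j) :
    sCount (addPart m q) j = (if j ≤ m then 1 else 0) + sCount q j := by
  by_cases hm : m = 0
  · rw [addPart, if_pos hm, if_neg (by omega), zero_add]
  · rw [addPart, if_neg hm, sCount_cons]

lemma pos_of_mem_addPart {m : ℕ} {q : Multiset ℕ} (hq : ∀ a ∈ q, 0 < a) {a : ℕ}
    (ha : a ∈ addPart m q) : 0 < a := by
  unfold addPart at ha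
  split_ifs at ha with hm
  · exact hq a ha
  · rcases Multiset.mem_cons.1 ha with rfl | ha
    exacts [Nat.pos_of_ne_zero hm, hq a ha]

lemma card_mod_two_eq_sum_mod_two {p : Multiset ℕ} (hodd : ∀ a ∈ p, a % 2 = 1) :
    Multiset.card p % 2 = p.sum % 2 := by
  rw [Multiset.sum_nat_mod, Multiset.map_congr rfl hodd, Multiset.map_const',
    Multiset.sum_replicate, smul_eq_mul, mul_one]

theorem transpose_eq_pMinus_of_odd_parts_general (n : ℕ) (p : Multiset ℕ)
    (hp : IsPartitionOf p (2 * n + 1))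
    (hodd : ∀ a ∈ p, a % 2 = 1) :
    Odd (Multiset.card p) ∧ 2 * nStar p = Multiset.card p - 1 ∧
      transpose (addPart (2 * nStar p) (pOne p + pOne p)) = pMinus p ∧
      ∀ c₁ c₂ : Multiset ℕ,
        IsSpCollapse (transpose (addPart (2 * nStar p) (pOne p + pOne p))) c₁ →
        IsSpCollapse (pMinus p) c₂ → c₁ = c₂ := by
  obtain ⟨hpos, hsum⟩ := hp
  have hcard : Multiset.card p % 2 = 1 := by rw [card_mod_two_eq_sum_mod_two hodd, hsum]; omega
  have hnStar : 2 * nStar p = Multiset.card p - 1 := by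
    rw [nStar, oddMult, Multiset.filter_eq_self.2 hodd]; omega
  have hP : addPart (2 * nStar p) (pOne p + pOne p) = transpose (pMinus p) := by
    refine eq_of_sCount_eq (fun _ => pos_of_mem_addPart fun _ h =>
      (Multiset.mem_add.1 h).elim pos_of_mem_transpose pos_of_mem_transpose)
      (fun _ => pos_of_mem_transpose) fun j hj => ?_
    have h₁ := sCount_transpose_pMinus_add hpos hj
    have h₂ := sCount_transpose_of_odd hodd hj
    rw [sCount_addPart _ _ hj, sCount_add, hnStar]
    split_ifs at * <;> omega
  have hT : transpose (addPart (2 * nStar p) (pOne p + pOne p)) = pMinus p := by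
    rw [hP, transpose_transpose fun _ => pos_of_mem_pMinus hpos]
  exact ⟨Nat.odd_iff.2 hcard, hnStar, hT, fun c₁ c₂ h₁ h₂ => (hT ▸ h₁).unique h₂⟩

/-- `p` an orthogonal partition of `2n+1` all of whose parts are odd.
Then `Σ_i a_i` (the number of parts) is odd, `2n* = (Σ_i a_i) − 1`, and
`P = [p₁ p₁ (2n*)]` satisfies `P^t = p^-`; in particular
`(P^t)_{Sp_{2n}} = (p^-)_{Sp_{2n}}`. -/
theorem transpose_eq_pMinus_of_odd_parts (n : ℕ) (p : Multiset ℕ)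
    (hp : IsPartitionOf p (2 * n + 1)) (horth : IsOrthogonal p)
    (hodd : ∀ a ∈ p, a % 2 = 1) :
    Odd (Multiset.card p) ∧ 2 * nStar p = Multiset.card p - 1 ∧
      transpose (addPart (2 * nStar p) (pOne p + pOne p)) = pMinus p ∧
      ∀ c₁ c₂ : Multiset ℕ,
        IsSpCollapse (transpose (addPart (2 * nStar p) (pOne p + pOne p))) c₁ →
        IsSpCollapse (pMinus p) c₂ → c₁ = c₂ :=
  transpose_eq_pMinus_of_odd_parts_general n p hp hodd

end JiangWF
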